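/- Let (A, α) and (A, β) be idempotent pairs in a symmetric monoidal category D with the same underlying object A. Then there is a unique morphism λ : A → A with β = α ∘ λ, and λ is an automorphism of A. Moreover, λ equals the composite A ≅ O ⊗ A → A ⊗ A → A ⊗ O ≅ A given by l⁻¹, then the inverse of α ⊗ 1, then 1 ⊗ β, then r. -/

import Mathlib

open CategoryTheory MonoidalCategory

/-- `(A, α)` is an idempotent pair: `r_A ∘ (1_A ⊗ α)` and `l_A ∘ (α ⊗ 1_A)` are equal
isomorphisms from `A ⊗ A` to `A`. -/
def IsIdempotentPair {D : Type*} [CategoryTheory.Category D]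
    [CategoryTheory.MonoidalCategory D] {A : D}
    (α : A ⟶ 𝟙_ D) : Prop :=
  CategoryTheory.MonoidalCategory.whiskerLeft A α ≫ (ρ_ A).hom =
      CategoryTheory.MonoidalCategory.whiskerRight α A ≫ (λ_ A).hom ∧
    CategoryTheory.IsIso (CategoryTheory.MonoidalCategory.whiskerRight α A ≫ (λ_ A).hom)

/-!
Write `e_α = l_A ∘ (α ⊗ 1)`, an isomorphism `A ⊗ A ≅ A`. Idempotence of `α` gives
`λ ∘ e_α = r_A ∘ (1 ⊗ (α ∘ λ))` for every `λ : A → A`, and conversely this equation with `β`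
in place of `α ∘ λ` forces `α ∘ λ = β`, because both sides of `α ∘ r_A ∘ (1 ⊗ β) = β ∘ e_α`
are `α ⊗ β` followed by the unitor of the unit. Hence `β = α ∘ λ` holds exactly for
`λ = r_A ∘ (1 ⊗ β) ∘ e_α⁻¹`, which is invertible since `r_A ∘ (1 ⊗ β) = e_β` is.
-/

namespace CategoryTheory.MonoidalCategory

variable {D : Type*} [Category D] [MonoidalCategory D]

lemma whiskerLeft_rightUnitor_comp_eq_whiskerRight_leftUnitor_comp {X Y : D}
    (f : X ⟶ 𝟙_ D) (g : Y ⟶ 𝟙_ D) :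
    X ◁ g ≫ (ρ_ X).hom ≫ f = f ▷ Y ≫ (λ_ Y).hom ≫ g := by
  rw [← rightUnitor_naturality, ← leftUnitor_naturality, ← Category.assoc, whisker_exchange,
    Category.assoc, unitors_equal]

end CategoryTheory.MonoidalCategory

namespace IsIdempotentPair

variable {D : Type*} [Category D] [MonoidalCategory D] {A : D} {α : A ⟶ 𝟙_ D}

lemma whiskerRight_leftUnitor_comp (hα : IsIdempotentPair α) (lam : A ⟶ A) :
    α ▷ A ≫ (λ_ A).hom ≫ lam = A ◁ (lam ≫ α) ≫ (ρ_ A).hom := by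
  rw [← leftUnitor_naturality, ← Category.assoc, ← whisker_exchange, Category.assoc, ← hα.1,
    whiskerLeft_comp, Category.assoc]

lemma comp_eq_iff (hα : IsIdempotentPair α) (lam : A ⟶ A) (β : A ⟶ 𝟙_ D) :
    lam ≫ α = β ↔ α ▷ A ≫ (λ_ A).hom ≫ lam = A ◁ β ≫ (ρ_ A).hom := by
  have := hα.2
  refine ⟨fun h => h ▸ hα.whiskerRight_leftUnitor_comp lam, fun h => ?_⟩
  refine (cancel_epi (α ▷ A ≫ (λ_ A).hom)).mp ?_
  simp only [Category.assoc]
  rw [reassoc_of% h, whiskerLeft_rightUnitor_comp_eq_whiskerRight_leftUnitor_comp]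

end IsIdempotentPair

theorem stmt13_general {D : Type*} [Category D] [MonoidalCategory D]
    {A : D} (α β : A ⟶ 𝟙_ D)
    (hα : IsIdempotentPair α) (hβ : IsIdempotentPair β) :
    (∃! lam : A ⟶ A, lam ≫ α = β) ∧
    ∀ lam : A ⟶ A, lam ≫ α = β →
      IsIso lam ∧ (α ▷ A) ≫ (λ_ A).hom ≫ lam = (A ◁ β) ≫ (ρ_ A).hom := by
  have := hα.2
  have : IsIso (A ◁ β ≫ (ρ_ A).hom) := hβ.1 ▸ hβ.2
  have comp_eq_iff_eq (lam : A ⟶ A) :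
      lam ≫ α = β ↔ lam = inv (α ▷ A ≫ (λ_ A).hom) ≫ A ◁ β ≫ (ρ_ A).hom := by
    rw [hα.comp_eq_iff, IsIso.eq_inv_comp, Category.assoc]
  refine ⟨⟨_, (comp_eq_iff_eq _).2 rfl, fun lam h => (comp_eq_iff_eq lam).1 h⟩,
    fun lam h => ⟨?_, ?_⟩⟩
  · rw [(comp_eq_iff_eq lam).1 h]
    infer_instance
  · exact (hα.comp_eq_iff lam β).1 h

theorem stmt13 {D : Type*} [Category D] [MonoidalCategory D] [SymmetricCategory D]
    {A : D} (α β : A ⟶ 𝟙_ D)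
    (hα : IsIdempotentPair α) (hβ : IsIdempotentPair β) :
    (∃! lam : A ⟶ A, lam ≫ α = β) ∧
    ∀ lam : A ⟶ A, lam ≫ α = β →
      IsIso lam ∧ (α ▷ A) ≫ (λ_ A).hom ≫ lam = (A ◁ β) ≫ (ρ_ A).hom :=
  stmt13_general α β hα hβ
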